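/- Let I and J be infinite sequences that are mutually NIP-indiscernible over (B';C'). Let I* be a continuation of I as in the extension lemma, taken with respect to sets B ⊇ B'∪J and C ⊇ C'. Then I⌢I* and J are mutually NIP-indiscernible over (B';C'). -/

import Mathlib

open FirstOrder Set

namespace DepDividing

universe u

variable (L : FirstOrder.Language.{u, u}) (M : Type u) [L.Structure M]

/-- A partitioned formula `φ(x;y)` (with `x : α` the object variables and `y : β`
the parameter variables) has the independence property (witnessed in the monster `M`). -/
def HasIP {α β : Type*} (φ : L.Formula (α ⊕ β)) : Prop :=
  ∃ (a : ℕ → α → M) (b : Set ℕ → β → M),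
    ∀ (i : ℕ) (S : Set ℕ), φ.Realize (Sum.elim (a i) (b S)) ↔ i ∈ S

/-- A partitioned formula is NIP if it does not have the independence property. -/
def IsNIPFml {α β : Type*} (φ : L.Formula (α ⊕ β)) : Prop := ¬ HasIP L M φ

/-- The set of elements of `M` appearing in a sequence of tuples. -/
def seqElems {ι γ : Type*} (s : ι → γ → M) : Set M :=
  Set.range fun p : ι × γ => s p.1 p.2

/-- `s` is an indiscernible sequence of `γ`-tuples over the set `A`. -/
def Indisc (A : Set M) {ι : Type*} [LinearOrder ι] {γ : Type*} (s : ι → γ → M) : Prop :=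
  ∀ (n m : ℕ) (φ : L.Formula ((Fin n × γ) ⊕ Fin m)) (a : Fin m → M),
    (∀ k, a k ∈ A) → ∀ i j : Fin n → ι, StrictMono i → StrictMono j →
      (φ.Realize (Sum.elim (fun p => s (i p.1) p.2) a) ↔
        φ.Realize (Sum.elim (fun p => s (j p.1) p.2) a))

/-- `s` is NIP-indiscernible over `(B;C)`: NIP formulas with unrestricted parameters
from `B` and restricted parameters from `C` cannot distinguish increasing tuples of `s`. -/
def NIPIndisc (B C : Set M) {ι : Type*} [LinearOrder ι] {γ : Type*} (s : ι → γ → M) : Prop :=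
  ∀ (n m r : ℕ) (φ : L.Formula (((Fin n × γ) ⊕ Fin m) ⊕ Fin r))
    (b : Fin m → M) (c : Fin r → M), IsNIPFml L M φ →
    (∀ k, b k ∈ B) → (∀ k, c k ∈ C) →
    ∀ i j : Fin n → ι, StrictMono i → StrictMono j →
      (φ.Realize (Sum.elim (Sum.elim (fun p => s (i p.1) p.2) b) c) ↔
        φ.Realize (Sum.elim (Sum.elim (fun p => s (j p.1) p.2) b) c))

/-- A family of sequences is mutually NIP-indiscernible over `(B;C)`:
each sequence is NIP-indiscernible over `B` together with all the others (and `C`). -/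
def MutNIPIndisc (B C : Set M) {κι ι γ : Type*} [LinearOrder ι]
    (I : κι → ι → γ → M) : Prop :=
  ∀ α, NIPIndisc L M (B ∪ ⋃ β ∈ {β | β ≠ α}, seqElems M (I β)) C (I α)

/-- An instance `φ(x, c)` of a formula, given by a partitioned formula together with
an assignment of its parameter variables. -/
structure FmlInst (γ : Type*) where
  n : ℕ
  fml : L.Formula (γ ⊕ Fin n)
  par : Fin n → M

/-- Realization of a formula instance at a tuple. -/
def FmlInst.Realize {γ : Type*} (F : FmlInst L M γ) (x : γ → M) : Prop :=
  F.fml.Realize (Sum.elim x F.par)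

/-- A formula instance is NIP if its underlying partitioned formula is NIP. -/
def FmlInst.IsNIP {γ : Type*} (F : FmlInst L M γ) : Prop := IsNIPFml L M F.fml

/-- `φ(x, c)` divides over `A`: there is an `A`-indiscernible sequence starting at `c`
whose corresponding instances are `k`-inconsistent for some `k`. -/
def DividesOver {γ : Type*} (F : FmlInst L M γ) (A : Set M) : Prop :=
  ∃ c : ℕ → Fin F.n → M, c 0 = F.par ∧ Indisc L M A c ∧
    ∃ k : ℕ, ∀ s : Finset ℕ, s.card = k →
      ¬ ∃ x : γ → M, ∀ i ∈ s, F.fml.Realize (Sum.elim x (c i))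

/-- A partial type over a set `C`: a set of formula instances with parameters in `C`. -/
structure PartialType (γ : Type*) (C : Set M) where
  fmls : Set (FmlInst L M γ)
  par_mem : ∀ F ∈ fmls, Set.range (FmlInst.par F) ⊆ C

/-- A tuple realizes a partial type if it realizes every formula instance in it. -/
def PartialType.Realize {γ : Type*} {C : Set M} (p : PartialType L M γ C) (x : γ → M) : Prop :=
  ∀ F ∈ p.fmls, FmlInst.Realize L M F x

/-- The complete type of the tuple `d` over the set `A` (as a partial type). -/
def typeOf {γ : Type*} (d : γ → M) (A : Set M) : PartialType L M γ A :=
  ⟨{F | Set.range F.par ⊆ A ∧ FmlInst.Realize L M F d}, fun _ hF => hF.1⟩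

/-- A partial type divides over `A` if it contains a formula instance dividing over `A`. -/
def TypeDividesOver {γ : Type*} {C : Set M} (p : PartialType L M γ C) (A : Set M) : Prop :=
  ∃ F ∈ p.fmls, DividesOver L M F A

/-- `T` (i.e. the theory of the monster `M`) has dependent dividing: whenever `M₀ ⪯ N`
and a complete type over `N` divides over `M₀`, it contains an instance of an NIP
formula dividing over `M₀`. -/
def DependentDividing : Prop :=
  ∀ M₀ N : L.ElementarySubstructure M, (M₀ : Set M) ⊆ (N : Set M) →
    ∀ (γ : Type u) (d : γ → M),
      TypeDividesOver L M (typeOf L M d (N : Set M)) (M₀ : Set M) →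
      ∃ F ∈ (typeOf L M d (N : Set M)).fmls,
        FmlInst.IsNIP L M F ∧ DividesOver L M F (M₀ : Set M)

/-- A partitioned formula has the tree property of the second kind. -/
def HasTP2 {γ : Type*} {m : ℕ} (φ : L.Formula (γ ⊕ Fin m)) : Prop :=
  ∃ b : ℕ → ℕ → Fin m → M,
    (∀ (α : ℕ) (s : Finset ℕ), s.card = 2 →
      ¬ ∃ x : γ → M, ∀ i ∈ s, φ.Realize (Sum.elim x (b α i))) ∧
    (∀ f : ℕ → ℕ, ∃ x : γ → M, ∀ α : ℕ, φ.Realize (Sum.elim x (b α (f α))))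

/-- The theory of `M` is NTP₂: no formula has TP₂. -/
def IsNTP2 : Prop :=
  ∀ (γ : Type u) (m : ℕ) (φ : L.Formula (γ ⊕ Fin m)), ¬ HasTP2 L M φ

/-- There is an inp-pattern of depth `κι` in the partial type `p`. -/
def HasInpPattern {γ : Type*} {C : Set M} (p : PartialType L M γ C) (κι : Type*) : Prop :=
  ∃ (nn : κι → ℕ) (φ : ∀ α, L.Formula (γ ⊕ Fin (nn α)))
    (b : ∀ α, ℕ → Fin (nn α) → M) (k : κι → ℕ),
    (∀ (α : κι) (s : Finset ℕ), s.card = k α →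
      ¬ ∃ x : γ → M, ∀ i ∈ s, (φ α).Realize (Sum.elim x (b α i))) ∧
    (∀ f : κι → ℕ, ∃ x : γ → M, PartialType.Realize L M p x ∧
      ∀ α, (φ α).Realize (Sum.elim x (b α (f α))))

/-- There is an NIP-inp-pattern of depth `κι` in `p`: an inp-pattern all whose
formulas are NIP. -/
def HasNIPInpPattern {γ : Type*} {C : Set M} (p : PartialType L M γ C) (κι : Type*) : Prop :=
  ∃ (nn : κι → ℕ) (φ : ∀ α, L.Formula (γ ⊕ Fin (nn α)))
    (b : ∀ α, ℕ → Fin (nn α) → M) (k : κι → ℕ),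
    (∀ α, IsNIPFml L M (φ α)) ∧
    (∀ (α : κι) (s : Finset ℕ), s.card = k α →
      ¬ ∃ x : γ → M, ∀ i ∈ s, (φ α).Realize (Sum.elim x (b α i))) ∧
    (∀ f : κι → ℕ, ∃ x : γ → M, PartialType.Realize L M p x ∧
      ∀ α, (φ α).Realize (Sum.elim x (b α (f α))))

/-- There is an NIP-ict-pattern of depth `κι` in `p`. -/
def HasNIPIctPattern {γ : Type*} {C : Set M} (p : PartialType L M γ C) (κι : Type*) : Prop :=
  ∃ (nn : κι → ℕ) (φ : ∀ α, L.Formula (γ ⊕ Fin (nn α)))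
    (b : ∀ α, ℕ → Fin (nn α) → M),
    (∀ α, IsNIPFml L M (φ α)) ∧
    (∀ f : κι → ℕ, ∃ x : γ → M, PartialType.Realize L M p x ∧
      ∀ (α : κι) (i : ℕ), ((φ α).Realize (Sum.elim x (b α i)) ↔ i = f α))

/-- The NIP dp-rank of `p` is at least `κι`: there are a realization `d` of `p` and
`κι`-many mutually NIP-indiscernible sequences over `C`, none of which is
NIP-indiscernible over `Cd`. -/
def NIPdpGE {γ : Type*} {C : Set M} (p : PartialType L M γ C) (κι : Type*) : Prop :=
  ∃ d : γ → M, PartialType.Realize L M p d ∧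
    ∃ (γ' : Type u) (I : κι → ℕ → γ' → M),
      MutNIPIndisc L M ∅ C I ∧
      ∀ α, ¬ NIPIndisc L M ∅ (C ∪ Set.range d) (I α)

/-- Condition (5): witnesses over an auxiliary set `D`. -/
def NIPdpWitnessOver {γ : Type*} {C : Set M} (p : PartialType L M γ C) (κι : Type*) : Prop :=
  ∃ d : γ → M, PartialType.Realize L M p d ∧
    ∃ (D : Set M) (γ' : Type u) (I : κι → ℕ → γ' → M),
      MutNIPIndisc L M D C I ∧
      ∀ α, ¬ NIPIndisc L M D (C ∪ Set.range d) (I α)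

/-- Concatenation of two sequences of tuples, indexed by the lexicographic sum. -/
def concatSeq {ι κ γ : Type*} (s : ι → γ → M) (t : κ → γ → M) : ι ⊕ₗ κ → γ → M :=
  fun i => Sum.elim s t (ofLex i)

/-- The property `S_{k,n}` for the pair `(𝓘, a)` over `A`. -/
def SknProp (A : Set M) {γ : Type*} (a : γ → M) {κι ι γ' : Type*} [LinearOrder ι]
    (I : κι → ι → γ' → M) (k n : ℕ) : Prop :=
  ∀ B : Set M, MutNIPIndisc L M B A I →
    ∀ e : Fin (k + n) → κι, Function.Injective e →
      ∃ s : Finset (Fin (k + n)), s.card = n ∧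
        MutNIPIndisc L M B (A ∪ Set.range a)
          (fun β : {x // x ∈ s} => I (e β.1))

/-- `T` has dependent dividing with respect to the reduct to `L'` (along `f : L' →ᴸ L`):
dividing of complete types over models is witnessed by instances of NIP `L'`-formulas. -/
def DependentDividingWrt (L' : FirstOrder.Language.{u, u}) [L'.Structure M]
    (f : L' →ᴸ L) : Prop :=
  ∀ M₀ N : L.ElementarySubstructure M, (M₀ : Set M) ⊆ (N : Set M) →
    ∀ (γ : Type u) (d : γ → M),
      TypeDividesOver L M (typeOf L M d (N : Set M)) (M₀ : Set M) →
      ∃ (n : ℕ) (ψ : L'.Formula (γ ⊕ Fin n)) (c : Fin n → M),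
        Set.range c ⊆ (N : Set M) ∧ IsNIPFml L' M ψ ∧
        (f.onFormula ψ).Realize (Sum.elim d c) ∧
        DividesOver L M ⟨n, f.onFormula ψ, c⟩ (M₀ : Set M)

/-- The number of `φ`-types over the finite parameter set `A` consistent with `p`
(the dual trace count). -/
noncomputable def traceCount {δ γ : Type*} {C : Set M} (φ : L.Formula (δ ⊕ γ))
    (p : PartialType L M γ C) (A : Finset (δ → M)) : ℕ :=
  Set.ncard (Set.range fun d : {d : γ → M // PartialType.Realize L M p d} =>
    fun a : {x // x ∈ A} => φ.Realize (Sum.elim a.1 d.1))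

/-- The dual `φ`-type count of `p` is `O(|A|^r)` over finite subsets of `base`. -/
def VCdualBound {δ γ : Type*} {C : Set M} (φ : L.Formula (δ ⊕ γ))
    (p : PartialType L M γ C) (base : Set (δ → M)) (r : ℝ) : Prop :=
  ∃ c : ℝ, ∀ A : Finset (δ → M), ↑A ⊆ base →
    (traceCount L M φ p A : ℝ) ≤ c * (A.card : ℝ) ^ r

/-! The first conjunct is the defining property of `I*`, applied to `(B' ∪ J; C')`. For the
second, take a NIP formula over `J` whose parameters come from `B'`, `C'` and finitely many
entries of `I⌢I*`. Read the other way round, it is a formula over those entries of `I⌢I*`, with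
parameters from `B' ∪ J` and `C'`. Since `I⌢I*` is NIP-indiscernible over `(B' ∪ J; C')` and `I`
is infinite, the entries can be moved into `I` without changing the truth value for any choice
of the `J`-tuple, and there the NIP-indiscernibility of `J` over `(B' ∪ I; C')` applies. -/

section

variable {L M}

open Language

theorem realize_congr_of_eqOn_freeVarFinset {α : Type*} [DecidableEq α] (φ : L.Formula α)
    {v v' : α → M} (h : Set.EqOn v v' φ.freeVarFinset) : φ.Realize v ↔ φ.Realize v' :=
  (BoundedFormula.realize_restrictFreeVar (f := id) (v := v ∘ Subtype.val) v
    fun _ => rfl).symm.trans (BoundedFormula.realize_restrictFreeVar (f := id) v' fun a => h a.2)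

theorem IsNIPFml.relabel {α β α' β' : Type*} {φ : L.Formula (α ⊕ β)} (h : IsNIPFml L M φ)
    (f : α → α') (g : β → β') : IsNIPFml L M (φ.relabel (Sum.map f g)) := by
  rintro ⟨a, b, hab⟩
  refine h ⟨fun i => a i ∘ f, fun S => b S ∘ g, fun i S => ?_⟩
  rw [← hab i S, Formula.realize_relabel]
  congr! 1
  ext (x | x) <;> rfl

theorem NIPIndisc.realize_iff_of_finite {B C : Set M} {κ γ : Type*} [LinearOrder κ]
    {s : κ → γ → M} (hs : NIPIndisc L M B C s) {ν β : Type*} [LinearOrder ν] [Fintype ν]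
    [Finite β] {r : ℕ} (φ : L.Formula (((ν × γ) ⊕ β) ⊕ Fin r)) (hφ : IsNIPFml L M φ)
    {b : β → M} (hb : ∀ k, b k ∈ B) {c : Fin r → M} (hc : ∀ k, c k ∈ C) {u v : ν → κ}
    (hu : StrictMono u) (hv : StrictMono v) :
    φ.Realize (Sum.elim (Sum.elim (fun p => s (u p.1) p.2) b) c) ↔
      φ.Realize (Sum.elim (Sum.elim (fun p => s (v p.1) p.2) b) c) := by
  let e := Fintype.orderIsoFinOfCardEq ν rfl
  let eβ := Finite.equivFin β
  have key := hs _ _ r _ (b ∘ eβ.symm) c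
    ((hφ.relabel (Sum.map (Prod.map e.symm id) eβ) id)) (fun _ => hb _) hc
    (u ∘ e) (v ∘ e) (hu.comp e.strictMono) (hv.comp e.strictMono)
  simp only [Formula.realize_relabel] at key
  convert key using 2 <;> ext ((p | k) | k) <;> simp

theorem NIPIndisc.realize_iff {B C : Set M} {κ γ : Type*} [LinearOrder κ]
    {s : κ → γ → M} (hs : NIPIndisc L M B C s) {ν X : Type*} [LinearOrder ν] [Finite ν]
    {r : ℕ} (φ : L.Formula (((ν × γ) ⊕ X) ⊕ Fin r)) (hφ : IsNIPFml L M φ)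
    {a : X → M} (ha : ∀ x, a x ∈ B) {c : Fin r → M} (hc : ∀ k, c k ∈ C) {u v : ν → κ}
    (hu : StrictMono u) (hv : StrictMono v) :
    φ.Realize (Sum.elim (Sum.elim (fun p => s (u p.1) p.2) a) c) ↔
      φ.Realize (Sum.elim (Sum.elim (fun p => s (v p.1) p.2) a) c) := by
  classical
  have := Fintype.ofFinite ν
  rcases isEmpty_or_nonempty (ν × γ) with _ | ⟨⟨p₀⟩⟩
  · rw [Subsingleton.elim (fun p : ν × γ => s (u p.1) p.2) fun p => s (v p.1) p.2]
  let Q := φ.freeVarFinset.preimage (Sum.inl ∘ Sum.inr)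
    (Sum.inl_injective.comp Sum.inr_injective).injOn
  -- `p₀` is a dummy target for the parameter variables that do not occur free in `φ`
  let g : (ν × γ) ⊕ X → (ν × γ) ⊕ Q :=
    Sum.elim Sum.inl fun x => if hx : x ∈ Q then Sum.inr ⟨x, hx⟩ else Sum.inl p₀
  have restrict : ∀ w : ν → κ,
      (φ.relabel (Sum.map g id)).Realize
          (Sum.elim (Sum.elim (fun p => s (w p.1) p.2) fun x : Q => a x) c) ↔
        φ.Realize (Sum.elim (Sum.elim (fun p => s (w p.1) p.2) a) c) := by
    intro w
    rw [Formula.realize_relabel]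
    refine realize_congr_of_eqOn_freeVarFinset φ ?_
    rintro ((p | x) | k) hx
    · rfl
    · simp [g, show x ∈ Q from Finset.mem_preimage.2 hx]
    · rfl
  rw [← restrict u, ← restrict v]
  exact hs.realize_iff_of_finite _ (hφ.relabel g id) (fun x => ha x) hc hu hv

theorem exists_eq_sumElim_of_mem_union_seqElems {B : Set M} {κ γ β : Type*} [Finite β]
    {s : κ → γ → M} {b : β → M} (hb : ∀ k, b k ∈ B ∪ seqElems M s) :
    ∃ (N : ℕ) (a : Fin N → M) (T : Finset κ) (w : β → Fin N ⊕ (T × γ)),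
      (∀ l, a l ∈ B) ∧ b = fun k => Sum.elim a (fun p => s p.1 p.2) (w k) := by
  classical
  have := Fintype.ofFinite β
  choose p hp using fun k (hk : b k ∉ B) => (hb k).resolve_left hk
  let T := Finset.univ.image fun k : {k // b k ∉ B} => (p k.1 k.2).1
  have hT : ∀ k (hk : b k ∉ B), (p k hk).1 ∈ T := fun k hk =>
    Finset.mem_image_of_mem _ (Finset.mem_univ (⟨k, hk⟩ : {k // b k ∉ B}))
  let e := Fintype.equivFin {k // b k ∈ B}
  refine ⟨_, fun l => b (e.symm l), T,
    fun k => if hk : b k ∈ B then .inl (e ⟨k, hk⟩) else .inr (⟨_, hT k hk⟩, (p k hk).2),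
    fun l => (e.symm l).2, funext fun k => ?_⟩
  by_cases hk : b k ∈ B
  · simp [hk]
  · simpa [hk] using (hp k hk).symm

theorem NIPIndisc.of_comp_strictMono {B C : Set M} {ι κ γ ι₂ γ₂ : Type*} [LinearOrder ι]
    [Infinite ι] [LinearOrder κ] [LinearOrder ι₂] {s : κ → γ → M} {t : ι₂ → γ₂ → M}
    {e : ι → κ} (he : StrictMono e) (hs : NIPIndisc L M (B ∪ seqElems M t) C s)
    (ht : NIPIndisc L M (B ∪ seqElems M (s ∘ e)) C t) :
    NIPIndisc L M (B ∪ seqElems M s) C t := by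
  intro n m r φ b c hφ hb hc i j hi hj
  obtain ⟨N, a, T, w, ha, rfl⟩ := exists_eq_sumElim_of_mem_union_seqElems hb
  obtain ⟨f⟩ := nonempty_orderEmbedding_of_finite_infinite T ι
  -- read `φ` the other way round: the `s`-entries become the objects, while the `t`-entries and
  -- the `B`-parameters become parameters
  let g : (Fin n × γ₂) ⊕ Fin m → (T × γ) ⊕ ((Fin n × γ₂) ⊕ Fin N) :=
    Sum.elim (Sum.inr ∘ Sum.inl) fun k => (w k).elim (Sum.inr ∘ Sum.inr) Sum.inl
  have swap : ∀ (x : Fin n → ι₂) (u : T → κ),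
      (φ.relabel (Sum.map g id)).Realize (Sum.elim (Sum.elim (fun p => s (u p.1) p.2)
          (Sum.elim (fun q => t (x q.1) q.2) a)) c) ↔
        φ.Realize (Sum.elim (Sum.elim (fun q => t (x q.1) q.2)
          fun k => Sum.elim a (fun p => s (u p.1) p.2) (w k)) c) := by
    intro x u
    rw [Formula.realize_relabel]
    congr! 1
    ext ((q | k) | k)
    · rfl
    · simp only [g, Function.comp_apply, Sum.map_inl, Sum.elim_inl, Sum.elim_inr]
      rcases w k with l | p <;> rfl
    · rfl
  have hmem : ∀ (x : Fin n → ι₂) (z : (Fin n × γ₂) ⊕ Fin N),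
      Sum.elim (fun q => t (x q.1) q.2) a z ∈ B ∪ seqElems M t := by
    rintro x (q | l)
    · exact Or.inr ⟨(x q.1, q.2), rfl⟩
    · exact Or.inl (ha l)
  have hshift : ∀ k,
      Sum.elim a (fun p => s (e (f p.1)) p.2) (w k) ∈ B ∪ seqElems M (s ∘ e) := by
    intro k
    rcases w k with l | p
    · exact Or.inl (ha l)
    · exact Or.inr ⟨(f p.1, p.2), rfl⟩
  have hmove : ∀ x : Fin n → ι₂,
      φ.Realize (Sum.elim (Sum.elim (fun q => t (x q.1) q.2)
          fun k => Sum.elim a (fun p => s p.1 p.2) (w k)) c) ↔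
        φ.Realize (Sum.elim (Sum.elim (fun q => t (x q.1) q.2)
          fun k => Sum.elim a (fun p => s (e (f p.1)) p.2) (w k)) c) := fun x => by
    rw [← swap x Subtype.val, ← swap x fun y => e (f y)]
    exact hs.realize_iff _ (hφ.relabel g id) (hmem x) hc (Subtype.strictMono_coe _)
      (he.comp f.strictMono)
  exact (hmove i).trans ((ht n m r φ _ c hφ hshift hc i j hi hj).trans (hmove j).symm)

end

theorem extend_mutually_NIPIndisc
    {ι : Type u} [LinearOrder ι] [Infinite ι] {γ : Type u}
    {ι₂ : Type u} [LinearOrder ι₂] {γ₂ : Type u}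
    (I : ι → γ → M) (J : ι₂ → γ₂ → M)
    (B' C' B C : Set M) (hB : B' ∪ seqElems M J ⊆ B) (hC : C' ⊆ C)
    (hIJ : NIPIndisc L M (B' ∪ seqElems M J) C' I)
    (hJI : NIPIndisc L M (B' ∪ seqElems M I) C' J)
    {lam : Type u} [LinearOrder lam] (Istar : lam → γ → M)
    (hstar : ∀ B'' C'' : Set M, B'' ⊆ B → C'' ⊆ C →
      NIPIndisc L M B'' C'' I → NIPIndisc L M B'' C'' (concatSeq M I Istar)) :
    NIPIndisc L M (B' ∪ seqElems M J) C' (concatSeq M I Istar) ∧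
      NIPIndisc L M (B' ∪ seqElems M (concatSeq M I Istar)) C' J := by
  have hconcat := hstar _ _ hB hC hIJ
  exact ⟨hconcat,
    hconcat.of_comp_strictMono (e := Sum.inlₗ) (fun _ _ => Sum.Lex.inl_lt_inl_iff.2) hJI⟩

end DepDividing
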